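/- Let Q be a facet of P_a not contained in any coordinate hyperplane, with L_Q = (Σ_i β_i x_i)/m_Q where the β_i are integers with gcd 1 and m_Q is the smallest positive integer making m_Q·L_Q integral. Then the set of classes modulo Z of elements of R_Q equals the subgroup of Q/Z generated by 1/m_Q. -/

import Mathlib

open Set

namespace BS

def toR {n : ℕ} (u : Fin n → ℤ) : Fin n → ℝ := fun i => (u i : ℝ)

def natR {n : ℕ} (u : Fin n → ℕ) : Fin n → ℝ := fun i => (u i : ℝ)

def natZ {n : ℕ} (u : Fin n → ℕ) : Fin n → ℤ := fun i => (u i : ℤ)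

/-- `Γ` is the exponent set of a nonzero monomial ideal. -/
def IsMonIdeal {n : ℕ} (Γ : Set (Fin n → ℕ)) : Prop :=
  Γ.Nonempty ∧ ∀ u ∈ Γ, ∀ w : Fin n → ℕ, u + w ∈ Γ

/-- The Newton polyhedron: convex hull of the exponent set. -/
def newton {n : ℕ} (Γ : Set (Fin n → ℕ)) : Set (Fin n → ℝ) :=
  convexHull ℝ (natR '' Γ)

/-- The subsemigroup (containing 0) of ℤⁿ generated by differences u - v,
u ∈ Γ, v ∈ Γ ∩ Q. -/
def diffMonoid {n : ℕ} (Γ : Set (Fin n → ℕ)) (Q : Set (Fin n → ℝ)) :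
    AddSubmonoid (Fin n → ℤ) :=
  AddSubmonoid.closure {d | ∃ u ∈ Γ, ∃ v ∈ Γ, natR v ∈ Q ∧ d = natZ u - natZ v}

/-- M_Q : the translate by e = (1,...,1) of the difference semigroup. -/
def MQ {n : ℕ} (Γ : Set (Fin n → ℕ)) (Q : Set (Fin n → ℝ)) : Set (Fin n → ℤ) :=
  {m | m - 1 ∈ diffMonoid Γ Q}

/-- M_Q^{(k)} = k·v₀ + M_Q. -/
def MQk {n : ℕ} (Γ : Set (Fin n → ℕ)) (Q : Set (Fin n → ℝ)) (v0 : Fin n → ℕ) (k : ℕ) :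
    Set (Fin n → ℤ) :=
  {m | m - (k : ℤ) • natZ v0 ∈ MQ Γ Q}

/-- V_Q : linear span of the face Q. -/
def VQ {n : ℕ} (Q : Set (Fin n → ℝ)) : Submodule ℝ (Fin n → ℝ) := Submodule.span ℝ Q

/-- R_Q = { -L_Q(u) : u ∈ (M_Q \ M_Q') ∩ V_Q }. -/
def RQ {n : ℕ} (Γ : Set (Fin n → ℕ)) (Q : Set (Fin n → ℝ)) (v0 : Fin n → ℕ)
    (L : (Fin n → ℝ) →ₗ[ℝ] ℝ) : Set ℝ :=
  {x | ∃ u ∈ MQ Γ Q \ MQk Γ Q v0 1, toR u ∈ VQ Q ∧ x = - L (toR u)}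

/-- Q is contained in some coordinate hyperplane. -/
def InCoordHyp {n : ℕ} (Q : Set (Fin n → ℝ)) : Prop := ∃ i, ∀ q ∈ Q, q i = 0

/-- The subgroup G_Q of ℤⁿ generated by differences of elements of Γ ∩ Q. -/
def diffGroup {n : ℕ} (Γ : Set (Fin n → ℕ)) (Q : Set (Fin n → ℝ)) :
    AddSubgroup (Fin n → ℤ) :=
  AddSubgroup.closure
    {d | ∃ u ∈ Γ, natR u ∈ Q ∧ ∃ v ∈ Γ, natR v ∈ Q ∧ d = natZ u - natZ v}

end BS

/-!
Since `m_Q L_Q = ∑ βᵢ xᵢ` is integral on `ℤⁿ`, every value of `L_Q` on a lattice point lies in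
`(1/m_Q) ℤ`. Conversely, as `gcd βᵢ = 1`, every residue modulo `m_Q` is a value of `∑ βᵢ (1 + wᵢ)`
with `w ∈ ℕⁿ`, and `1 + w ∈ M_Q`. Subtracting `v₀ ∈ Γ ∩ Q` lowers `L_Q` by exactly `1`, while `L_Q`
is bounded below on `M_Q`; so subtracting `v₀` as often as possible without leaving `M_Q` lands in
`M_Q \ M_Q'` and keeps the class modulo `ℤ`.
-/

theorem Int.exists_nat_sum_mul_modEq {ι : Type*} [Fintype ι] {β : ι → ℤ}
    (hβ : Finset.univ.gcd β = 1) {m : ℕ} (hm : m ≠ 0) (r : ℤ) :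
    ∃ w : ι → ℕ, ∑ i, β i * w i ≡ r [ZMOD m] := by
  obtain ⟨g, hg⟩ := Finset.univ.gcd_eq_sum_mul β
  have hw : ∀ i, (((g i * r) % m).toNat : ℤ) ≡ g i * r [ZMOD m] := fun i => by
    rw [Int.toNat_of_nonneg (Int.emod_nonneg _ (by exact_mod_cast hm))]
    exact Int.mod_modEq _ _
  refine ⟨fun i => ((g i * r) % m).toNat, ?_⟩
  calc ∑ i, β i * (((g i * r) % m).toNat : ℤ) ≡ ∑ i, β i * (g i * r) [ZMOD m] :=
        Int.ModEq.sum fun i _ => (hw i).mul_left _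
    _ = r := by simp_rw [← mul_assoc, ← Finset.sum_mul, ← hg, hβ, one_mul]

namespace BS

variable {n : ℕ}

@[simp]
theorem toR_zero : toR (0 : Fin n → ℤ) = 0 := by
  funext i; simp [toR]

@[simp]
theorem toR_add (a b : Fin n → ℤ) : toR (a + b) = toR a + toR b := by
  funext i; simp [toR]

@[simp]
theorem toR_sub (a b : Fin n → ℤ) : toR (a - b) = toR a - toR b := by
  funext i; simp [toR]

@[simp]
theorem toR_nsmul (t : ℕ) (a : Fin n → ℤ) : toR (t • a) = t • toR a := by
  funext i; simp [toR]

@[simp]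
theorem toR_natZ (u : Fin n → ℕ) : toR (natZ u) = natR u := by
  funext i; simp [toR, natZ, natR]

theorem map_toR_eq {L : (Fin n → ℝ) →ₗ[ℝ] ℝ} {β : Fin n → ℤ} {m : ℕ}
    (hβ : ∀ x, L x = (∑ i, (β i : ℝ) * x i) / (m : ℝ)) (u : Fin n → ℤ) :
    L (toR u) = ((∑ i, β i * u i : ℤ) : ℝ) / m := by
  rw [hβ]
  push_cast [toR]
  rfl

section MQ

variable {Γ : Set (Fin n → ℕ)} {Q : Set (Fin n → ℝ)} {v0 : Fin n → ℕ}
  {L : (Fin n → ℝ) →ₗ[ℝ] ℝ}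

theorem map_toR_nonneg_of_mem_diffMonoid (hLge : ∀ u ∈ Γ, 1 ≤ L (natR u))
    (hL1 : ∀ q ∈ Q, L q = 1) {d : Fin n → ℤ} (hd : d ∈ diffMonoid Γ Q) : 0 ≤ L (toR d) := by
  induction hd using AddSubmonoid.closure_induction with
  | mem d hd =>
    obtain ⟨u, hu, v, -, hvQ, rfl⟩ := hd
    simpa [hL1 _ hvQ] using hLge u hu
  | zero => simp
  | add a b _ _ ha hb => simpa using add_nonneg ha hb

theorem map_toR_one_le_of_mem_MQ (hLge : ∀ u ∈ Γ, 1 ≤ L (natR u)) (hL1 : ∀ q ∈ Q, L q = 1)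
    {m : Fin n → ℤ} (hm : m ∈ MQ Γ Q) : L (toR 1) ≤ L (toR m) := by
  simpa using map_toR_nonneg_of_mem_diffMonoid hLge hL1 hm

theorem map_toR_sub_nsmul (hL1 : ∀ q ∈ Q, L q = 1) (hv0Q : natR v0 ∈ Q) (m : Fin n → ℤ)
    (t : ℕ) : L (toR (m - t • natZ v0)) = L (toR m) - t := by
  rw [toR_sub, toR_nsmul, toR_natZ, map_sub, map_nsmul, hL1 _ hv0Q, nsmul_eq_mul, mul_one]

theorem exists_sub_nsmul_notMem_MQ (hLge : ∀ u ∈ Γ, 1 ≤ L (natR u)) (hL1 : ∀ q ∈ Q, L q = 1)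
    (hv0Q : natR v0 ∈ Q) (m : Fin n → ℤ) : ∃ t : ℕ, m - t • natZ v0 ∉ MQ Γ Q := by
  obtain ⟨t, ht⟩ := exists_nat_gt (L (toR m) - L (toR 1))
  refine ⟨t, fun hmem => ?_⟩
  have := map_toR_one_le_of_mem_MQ hLge hL1 hmem
  rw [map_toR_sub_nsmul hL1 hv0Q] at this
  linarith

theorem exists_sub_nsmul_mem_MQ_diff {m : Fin n → ℤ} (hm : m ∈ MQ Γ Q)
    (h : ∃ t : ℕ, m - t • natZ v0 ∉ MQ Γ Q) :
    ∃ t : ℕ, m - t • natZ v0 ∈ MQ Γ Q \ MQk Γ Q v0 1 := by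
  classical
  obtain ⟨t, ht⟩ : ∃ t, Nat.find h = t + 1 :=
    Nat.exists_eq_succ_of_ne_zero fun h0 => Nat.find_spec h (by simpa [h0] using hm)
  refine ⟨t, not_not.mp (Nat.find_min h (by omega)), fun hk => Nat.find_spec h ?_⟩
  rw [ht, add_smul, one_smul, ← sub_sub]
  simpa [MQk] using hk

theorem one_add_natZ_mem_MQ (hΓ : ∀ u ∈ Γ, ∀ w, u + w ∈ Γ) (hv0 : v0 ∈ Γ) (hv0Q : natR v0 ∈ Q)
    (w : Fin n → ℕ) : 1 + natZ w ∈ MQ Γ Q := by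
  have hdiff : 1 + natZ w - 1 = natZ (v0 + w) - natZ v0 := by
    funext i; simp [natZ]
  show 1 + natZ w - 1 ∈ diffMonoid Γ Q
  exact hdiff ▸ AddSubmonoid.subset_closure ⟨v0 + w, hΓ v0 hv0 w, v0, hv0, hv0Q, rfl⟩

theorem exists_mem_MQ_sum_mul_modEq (hΓ : ∀ u ∈ Γ, ∀ w, u + w ∈ Γ) (hv0 : v0 ∈ Γ)
    (hv0Q : natR v0 ∈ Q) {β : Fin n → ℤ} (hβ : Finset.univ.gcd β = 1) {mQ : ℕ} (hmQ : mQ ≠ 0)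
    (r : ℤ) : ∃ m ∈ MQ Γ Q, ∑ i, β i * m i ≡ r [ZMOD mQ] := by
  obtain ⟨w, hw⟩ := Int.exists_nat_sum_mul_modEq hβ hmQ (r - ∑ i, β i)
  refine ⟨1 + natZ w, one_add_natZ_mem_MQ hΓ hv0 hv0Q w, ?_⟩
  have hsum : ∑ i, β i * (1 + natZ w) i = ∑ i, β i + ∑ i, β i * w i := by
    simp [natZ, mul_add, Finset.sum_add_distrib]
  rw [hsum]
  simpa using hw.add_left (∑ i, β i)

end MQ

end BS

theorem RQ_classes_mod_Z_general {n : ℕ} (Γ : Set (Fin n → ℕ)) (hΓ : BS.IsMonIdeal Γ)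
    (Q : Set (Fin n → ℝ))
    (L : (Fin n → ℝ) →ₗ[ℝ] ℝ) (hL1 : ∀ q ∈ Q, L q = 1)
    (hLge : ∀ x ∈ BS.newton Γ, 1 ≤ L x)
    (hspan : BS.VQ Q = ⊤)
    (v0 : Fin n → ℕ) (hv0 : v0 ∈ Γ) (hv0Q : BS.natR v0 ∈ Q)
    (β : Fin n → ℤ) (mQ : ℕ) (hmQ : 0 < mQ)
    (hβ : ∀ x, L x = (∑ i, (β i : ℝ) * x i) / (mQ : ℝ))
    (hgcd : Finset.univ.gcd β = 1) :
    {x : ℝ | ∃ y ∈ BS.RQ Γ Q v0 L, ∃ k : ℤ, x = y + (k : ℝ)} =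
      {x : ℝ | ∃ j k : ℤ, x = (j : ℝ) / (mQ : ℝ) + (k : ℝ)} := by
  have hLΓ : ∀ u ∈ Γ, 1 ≤ L (BS.natR u) := fun u hu =>
    hLge _ (subset_convexHull ℝ _ ⟨u, hu, rfl⟩)
  ext x
  constructor
  · rintro ⟨_, ⟨u, -, -, rfl⟩, k, rfl⟩
    exact ⟨-∑ i, β i * u i, k, by rw [BS.map_toR_eq hβ]; push_cast; ring⟩
  · rintro ⟨j, k, rfl⟩
    obtain ⟨m, hm, hmod⟩ := BS.exists_mem_MQ_sum_mul_modEq hΓ.2 hv0 hv0Q hgcd hmQ.ne' (-j)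
    obtain ⟨s, hs⟩ := hmod.symm.dvd
    replace hs : ∑ i, β i * m i = mQ * s - j := by linarith
    obtain ⟨t, ht⟩ :=
      BS.exists_sub_nsmul_mem_MQ_diff hm (BS.exists_sub_nsmul_notMem_MQ hLΓ hL1 hv0Q m)
    refine ⟨_, ⟨_, ht, hspan ▸ Submodule.mem_top, rfl⟩, s - t + k, ?_⟩
    rw [BS.map_toR_sub_nsmul hL1 hv0Q, BS.map_toR_eq hβ, hs]
    push_cast
    field_simp
    ring

/-- For a facet Q with L_Q = (Σ βᵢ xᵢ)/m_Q, gcd(βᵢ) = 1: the classes mod ℤ of the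
elements of R_Q form the subgroup of ℚ/ℤ generated by 1/m_Q. -/
theorem RQ_classes_mod_Z {n : ℕ} (Γ : Set (Fin n → ℕ)) (hΓ : BS.IsMonIdeal Γ)
    (hproper : (0 : Fin n → ℕ) ∉ Γ)
    (Q : Set (Fin n → ℝ)) (hface : IsExposed ℝ (BS.newton Γ) Q)
    (hnc : ¬ BS.InCoordHyp Q)
    (L : (Fin n → ℝ) →ₗ[ℝ] ℝ) (hL1 : ∀ q ∈ Q, L q = 1)
    (hLge : ∀ x ∈ BS.newton Γ, 1 ≤ L x)
    (hQeq : Q = BS.newton Γ ∩ {x | L x = 1})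
    (hspan : BS.VQ Q = ⊤)
    (v0 : Fin n → ℕ) (hv0 : v0 ∈ Γ) (hv0Q : BS.natR v0 ∈ Q)
    (β : Fin n → ℤ) (mQ : ℕ) (hmQ : 0 < mQ)
    (hβ : ∀ x, L x = (∑ i, (β i : ℝ) * x i) / (mQ : ℝ))
    (hgcd : Finset.univ.gcd β = 1) :
    {x : ℝ | ∃ y ∈ BS.RQ Γ Q v0 L, ∃ k : ℤ, x = y + (k : ℝ)} =
      {x : ℝ | ∃ j k : ℤ, x = (j : ℝ) / (mQ : ℝ) + (k : ℝ)} :=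
  RQ_classes_mod_Z_general Γ hΓ Q L hL1 hLge hspan v0 hv0 hv0Q β mQ hmQ hβ hgcd
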